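/- arXiv:2012.14001 — 2 statements merged into one kernel-verified Lean document; each statement's English description precedes it below -/
import Mathlib

section
/- Let S be a unital star-subalgebra of Matrix n n ℂ, let ρ ∈ Matrix n n ℂ be positive definite with Tr ρ = 1, and let ρ_C ∈ S be positive definite with Tr(ρ_C * c) = Tr(ρ * c) for all c ∈ S. If there exists a ρ-preserving conditional expectation from Matrix n n ℂ onto S, then ρ^{1/2} * c * ρ^{-1/2} = ρ_C^{1/2} * c * ρ_C^{-1/2} for every c ∈ S. -/
open Matrix
open scoped ComplexOrder

/-- A linear map between complex matrix algebras is completely positive if for every `k ≥ 1`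
its blockwise application to `k × k` block matrices sends positive semidefinite matrices to
positive semidefinite matrices. -/
def IsCP {n m : Type*} [Fintype n] [Fintype m]
    (Φ : Matrix n n ℂ → Matrix m m ℂ) : Prop :=
  ∀ (k : ℕ) (M : Matrix (n × Fin k) (n × Fin k) ℂ), M.PosSemidef →
    (Matrix.of fun p q : m × Fin k =>
      Φ (Matrix.of fun i j => M (i, p.2) (j, q.2)) p.1 q.1).PosSemidef

/-- A conditional expectation onto a unital star-subalgebra `S` (given by its carrier set)
is a unital completely positive linear map with range inside `S`, fixing every element of
`S`, and satisfying the `S`-bimodule property. -/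
def IsCondExpOn {d : Type*} [Fintype d] [DecidableEq d] (S : Set (Matrix d d ℂ))
    (E : Matrix d d ℂ → Matrix d d ℂ) : Prop :=
  (∀ x y, E (x + y) = E x + E y) ∧
  (∀ (z : ℂ) (x : Matrix d d ℂ), E (z • x) = z • E x) ∧
  E 1 = 1 ∧
  IsCP E ∧
  (∀ x, E x ∈ S) ∧
  (∀ c ∈ S, E c = c) ∧
  (∀ c₁ ∈ S, ∀ c₂ ∈ S, ∀ x, E (c₁ * x * c₂) = c₁ * E x * c₂)

/-- The positive semidefinite square root of a positive semidefinite matrix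
(the definition of `Matrix.PosSemidef.sqrt` in the older Mathlib). -/
noncomputable def Matrix.PosSemidef.sqrt {n 𝕜 : Type*} [Fintype n] [RCLike 𝕜] [DecidableEq n]
    {A : Matrix n n 𝕜} (hA : A.PosSemidef) : Matrix n n 𝕜 :=
  hA.1.eigenvectorUnitary.1 * diagonal ((↑) ∘ (√·) ∘ hA.1.eigenvalues) *
  (star hA.1.eigenvectorUnitary : Matrix n n 𝕜)

/-!
A `ρ`-preserving conditional expectation `E` onto `S` is the orthogonal projection for the
state `Tr (ρ ·)`: by the bimodule property, `Tr (ρ s (x - E x)) = Tr (ρ (x - E x) s) = 0` for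
`s ∈ S`. For `x = ρ c ρ⁻¹` this forces `x = E x`, so `S` is invariant under conjugation by `ρ`.
Since `Tr (ρ ·)` is faithful on `S`, the elements `ρ c ρ⁻¹` and `ρ_C c ρ_C⁻¹` of `S` coincide,
as they pair identically with `S`. Taking `c = ρ_C` shows that `ρ` and `ρ_C` commute, so
`h = ρ_C⁻¹ ρ` is positive and commutes with `S`, and `ρ^{1/2} = ρ_C^{1/2} h^{1/2}` with `h^{1/2}`
still commuting with `S`.
-/

open scoped MatrixOrder

section CFCSqrt

variable {A : Type*} [Ring A] [StarRing A] [Algebra ℝ A] [TopologicalSpace A]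
  [ContinuousFunctionalCalculus ℝ A IsSelfAdjoint] [IsTopologicalRing A] [T2Space A]
  [PartialOrder A] [NonnegSpectrumClass ℝ A] [StarOrderedRing A]

theorem Commute.cfcSqrt_left {a b : A} (h : Commute a b) : Commute (CFC.sqrt a) b := by
  rw [CFC.sqrt_eq_cfc]
  exact h.cfc_nnreal _

theorem CFC.sqrt_mul_of_commute {a b : A} (ha : 0 ≤ a) (hb : 0 ≤ b) (h : Commute a b) :
    sqrt (a * b) = sqrt a * sqrt b := by
  have hab : Commute (sqrt a) (sqrt b) := h.cfcSqrt_left.symm.cfcSqrt_left.symm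
  refine sqrt_unique ?_ (hab.mul_nonneg (sqrt_nonneg a) (sqrt_nonneg b))
  rw [hab.symm.mul_mul_mul_comm, sqrt_mul_sqrt_self a ha, sqrt_mul_sqrt_self b hb]

end CFCSqrt

namespace Matrix

variable {n : Type*} [Fintype n] [DecidableEq n]

section CommRing

variable {R : Type*} [CommRing R]

theorem commute_nonsing_inv_left {a b : Matrix n n R} (h : Commute a b) : Commute a⁻¹ b := by
  by_cases ha : IsUnit a
  · obtain ⟨u, rfl⟩ := ha
    rw [← coe_units_inv]
    exact h.units_inv_left
  · rw [nonsing_inv_apply_not_isUnit a ((isUnit_iff_isUnit_det a).not.mp ha)]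
    exact Commute.zero_left b

theorem mul_mul_nonsing_inv_eq_iff {a b : Matrix n n R} (ha : IsUnit a) (hb : IsUnit b)
    (c : Matrix n n R) : a * c * a⁻¹ = b * c * b⁻¹ ↔ Commute (b⁻¹ * a) c := by
  rw [isUnit_iff_isUnit_det] at ha hb
  constructor
  · intro h
    calc b⁻¹ * a * c = b⁻¹ * (a * c * a⁻¹) * a := by
          simp only [Matrix.mul_assoc, nonsing_inv_mul _ ha, Matrix.mul_one]
      _ = c * (b⁻¹ * a) := by
          rw [h]; simp only [← Matrix.mul_assoc, nonsing_inv_mul _ hb, Matrix.one_mul]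
  · intro h
    calc a * c * a⁻¹ = b * (b⁻¹ * a * c) * a⁻¹ := by
          simp only [← Matrix.mul_assoc, mul_nonsing_inv _ hb, Matrix.one_mul]
      _ = b * c * b⁻¹ := by
          rw [h.eq]; simp only [Matrix.mul_assoc, mul_nonsing_inv _ ha, Matrix.mul_one]

theorem trace_mul_mul_mul_mul_nonsing_inv {a : Matrix n n R} (ha : IsUnit a)
    (s c : Matrix n n R) :
    (a * (s * (a * c * a⁻¹))).trace = (s * (a * c)).trace := by
  rw [isUnit_iff_isUnit_det] at ha
  rw [show a * (s * (a * c * a⁻¹)) = a * (s * (a * c)) * a⁻¹ by simp only [Matrix.mul_assoc],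
    trace_mul_comm, nonsing_inv_mul_cancel_left _ _ ha]

end CommRing

theorem _root_.Subalgebra.nonsing_inv_mem {K : Type*} [Field K]
    (S : Subalgebra K (Matrix n n K)) {a : Matrix n n K} (ha : a ∈ S) : a⁻¹ ∈ S := by
  by_cases hu : IsUnit a
  · have hx : IsUnit (⟨a, ha⟩ : S) :=
      IsArtinianRing.isUnit_of_isIntegral_of_nonZeroDivisor (R := K)
        (Algebra.IsIntegral.isIntegral _)
        (comap_nonZeroDivisors_le_of_injective (f := S.val) Subtype.val_injective
          hu.mem_nonZeroDivisors)
    obtain ⟨u, hu⟩ := hx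
    rw [inv_eq_left_inv (B := ((u⁻¹ : Sˣ) : S))
      (by simpa [hu] using congrArg Subtype.val u.inv_mul)]
    exact Subtype.prop _
  · rw [nonsing_inv_apply_not_isUnit a ((isUnit_iff_isUnit_det a).not.mp hu)]
    exact zero_mem S

theorem PosSemidef.sqrt_eq_cfcSqrt {A : Matrix n n ℂ} (hA : A.PosSemidef) :
    hA.sqrt = CFC.sqrt A := by
  rw [CFC.sqrt_eq_real_sqrt A hA.nonneg, cfcₙ_eq_cfc, hA.1.cfc_eq]
  rfl

theorem PosDef.eq_zero_of_trace_mul_conjTranspose_mul_self {ρ z : Matrix n n ℂ} (hρ : ρ.PosDef)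
    (h : (ρ * (zᴴ * z)).trace = 0) : z = 0 := by
  obtain ⟨b, rfl⟩ := CStarAlgebra.nonneg_iff_eq_star_mul_self.mp hρ.posSemidef.nonneg
  have hzb : z * bᴴ = 0 := by
    rw [← trace_conjTranspose_mul_self_eq_zero_iff, conjTranspose_mul,
      conjTranspose_conjTranspose, ← h, star_eq_conjTranspose, trace_mul_comm (bᴴ * b),
      Matrix.mul_assoc b, trace_mul_comm b]
    simp only [Matrix.mul_assoc]
  refine hρ.isUnit.mul_left_eq_zero.mp ?_
  rw [star_eq_conjTranspose, ← Matrix.mul_assoc, hzb, Matrix.zero_mul]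

theorem cfcSqrt_mul_mul_nonsing_inv_eq {ρ σ c : Matrix n n ℂ} (hρ : ρ.PosDef) (hσ : σ.PosDef)
    (hρσ : Commute ρ σ) (hc : ρ * c * ρ⁻¹ = σ * c * σ⁻¹) :
    CFC.sqrt ρ * c * (CFC.sqrt ρ)⁻¹ = CFC.sqrt σ * c * (CFC.sqrt σ)⁻¹ := by
  have hσdet : IsUnit σ.det := (isUnit_iff_isUnit_det σ).mp hσ.isUnit
  have hsqrt_unit {a : Matrix n n ℂ} (ha : a.PosDef) : IsUnit (CFC.sqrt a) :=
    (CFC.isUnit_sqrt_iff a ha.posSemidef.nonneg).mpr ha.isUnit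
  have hh : 0 ≤ σ⁻¹ * ρ := (commute_nonsing_inv_left hρσ.symm).mul_nonneg
    hσ.posSemidef.inv.nonneg hρ.posSemidef.nonneg
  have hσh : Commute σ (σ⁻¹ * ρ) :=
    (commute_nonsing_inv_left (Commute.refl σ)).symm.mul_right hρσ.symm
  have hhc : Commute (σ⁻¹ * ρ) c := (mul_mul_nonsing_inv_eq_iff hρ.isUnit hσ.isUnit c).mp hc
  have hsqrt : CFC.sqrt ρ = CFC.sqrt σ * CFC.sqrt (σ⁻¹ * ρ) := by
    conv_lhs => rw [← mul_nonsing_inv_cancel_left σ ρ hσdet]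
    exact CFC.sqrt_mul_of_commute hσ.posSemidef.nonneg hh hσh
  rw [mul_mul_nonsing_inv_eq_iff (hsqrt_unit hρ) (hsqrt_unit hσ), hsqrt,
    nonsing_inv_mul_cancel_left _ _ ((isUnit_iff_isUnit_det _).mp (hsqrt_unit hσ))]
  exact hhc.cfcSqrt_left

end Matrix

namespace StarSubalgebra

variable {n : Type*} [Fintype n] [DecidableEq n] (S : StarSubalgebra ℂ (Matrix n n ℂ))

theorem eq_of_forall_trace_mul_mul_eq {ρ a b : Matrix n n ℂ} (hρ : ρ.PosDef) (ha : a ∈ S)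
    (hb : b ∈ S) (h : ∀ s ∈ S, (ρ * (s * a)).trace = (ρ * (s * b)).trace) : a = b :=
  sub_eq_zero.mp <| hρ.eq_zero_of_trace_mul_conjTranspose_mul_self <| by
    rw [Matrix.mul_sub, Matrix.mul_sub, trace_sub, h (a - b)ᴴ (star_mem (sub_mem ha hb)),
      sub_self]

theorem mul_mul_nonsing_inv_eq_of_trace_mul_eq {ρ σ c : Matrix n n ℂ} (hρ : ρ.PosDef)
    (hσ : σ.PosDef) (hσS : σ ∈ S) (hσρ : ∀ c ∈ S, (σ * c).trace = (ρ * c).trace)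
    (hρS : ∀ c ∈ S, ρ * c * ρ⁻¹ ∈ S) (hc : c ∈ S) :
    ρ * c * ρ⁻¹ = σ * c * σ⁻¹ := by
  have hσc : σ * c * σ⁻¹ ∈ S :=
    mul_mem (mul_mem hσS hc) (S.toSubalgebra.nonsing_inv_mem hσS)
  refine S.eq_of_forall_trace_mul_mul_eq hρ (hρS c hc) hσc fun s hs => ?_
  rw [← hσρ _ (mul_mem hs hσc), trace_mul_mul_mul_mul_nonsing_inv hρ.isUnit,
    trace_mul_mul_mul_mul_nonsing_inv hσ.isUnit, trace_mul_comm s, trace_mul_comm s,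
    Matrix.mul_assoc, Matrix.mul_assoc, hσρ _ (mul_mem hc hs)]

end StarSubalgebra

namespace IsCondExpOn

variable {n : Type*} [Fintype n] [DecidableEq n] {S : StarSubalgebra ℂ (Matrix n n ℂ)}
  {E : Matrix n n ℂ → Matrix n n ℂ}

theorem map_sub (hE : IsCondExpOn (S : Set (Matrix n n ℂ)) E) (x y : Matrix n n ℂ) :
    E (x - y) = E x - E y := by
  rw [sub_eq_add_neg, ← neg_one_smul ℂ y, hE.1, hE.2.1, neg_one_smul, ← sub_eq_add_neg]

theorem map_mul_left (hE : IsCondExpOn (S : Set (Matrix n n ℂ)) E) {c : Matrix n n ℂ}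
    (hc : c ∈ S) (x : Matrix n n ℂ) : E (c * x) = c * E x := by
  simpa using hE.2.2.2.2.2.2 c hc 1 (one_mem S) x

theorem map_mul_right (hE : IsCondExpOn (S : Set (Matrix n n ℂ)) E) {c : Matrix n n ℂ}
    (hc : c ∈ S) (x : Matrix n n ℂ) : E (x * c) = E x * c := by
  simpa using hE.2.2.2.2.2.2 1 (one_mem S) c hc x

variable {ρ : Matrix n n ℂ}

theorem trace_mul_mul_sub_eq_zero (hE : IsCondExpOn (S : Set (Matrix n n ℂ)) E)
    (hEρ : ∀ x, (ρ * E x).trace = (ρ * x).trace) {c : Matrix n n ℂ} (hc : c ∈ S)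
    (x : Matrix n n ℂ) : (ρ * (c * (x - E x))).trace = 0 := by
  rw [Matrix.mul_sub, Matrix.mul_sub, trace_sub, ← hEρ (c * x), hE.map_mul_left hc, sub_self]

theorem trace_mul_sub_mul_eq_zero (hE : IsCondExpOn (S : Set (Matrix n n ℂ)) E)
    (hEρ : ∀ x, (ρ * E x).trace = (ρ * x).trace) {c : Matrix n n ℂ} (hc : c ∈ S)
    (x : Matrix n n ℂ) : (ρ * ((x - E x) * c)).trace = 0 := by
  rw [Matrix.sub_mul, Matrix.mul_sub, trace_sub, ← hEρ (x * c), hE.map_mul_right hc, sub_self]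

theorem mul_mul_nonsing_inv_mem (hE : IsCondExpOn (S : Set (Matrix n n ℂ)) E)
    (hEρ : ∀ x, (ρ * E x).trace = (ρ * x).trace) (hρ : ρ.PosDef) {c : Matrix n n ℂ}
    (hc : c ∈ S) : ρ * c * ρ⁻¹ ∈ S := by
  have hES : ∀ y, E y ∈ S := hE.2.2.2.2.1
  set x := ρ * c * ρ⁻¹
  have hρx : ρ * xᴴ = cᴴ * ρ := by
    rw [conjTranspose_mul, conjTranspose_mul, conjTranspose_nonsing_inv, hρ.isHermitian.eq,
      ← Matrix.mul_assoc, ← Matrix.mul_assoc,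
      mul_nonsing_inv _ ((isUnit_iff_isUnit_det ρ).mp hρ.isUnit), Matrix.one_mul]
  suffices x - E x = 0 from sub_eq_zero.mp this ▸ hES x
  refine hρ.eq_zero_of_trace_mul_conjTranspose_mul_self ?_
  calc (ρ * ((x - E x)ᴴ * (x - E x))).trace
      = (ρ * (xᴴ * (x - E x))).trace - (ρ * ((E x)ᴴ * (x - E x))).trace := by
        rw [conjTranspose_sub, Matrix.sub_mul, Matrix.mul_sub, trace_sub]
    _ = (ρ * ((x - E x) * cᴴ)).trace := by
        rw [hE.trace_mul_mul_sub_eq_zero hEρ (c := (E x)ᴴ) (star_mem (hES x)), sub_zero,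
          ← Matrix.mul_assoc, hρx, Matrix.mul_assoc, trace_mul_comm, Matrix.mul_assoc]
    _ = 0 := hE.trace_mul_sub_mul_eq_zero hEρ (star_mem hc) x

end IsCondExpOn

theorem rho_preserving_condExp_imp_modular_eq_general
    {n : ℕ} (S : StarSubalgebra ℂ (Matrix (Fin n) (Fin n) ℂ))
    (ρ : Matrix (Fin n) (Fin n) ℂ) (hρ : ρ.PosDef)
    (ρC : Matrix (Fin n) (Fin n) ℂ) (hρCS : ρC ∈ S) (hρC : ρC.PosDef)
    (hρCtr : ∀ c ∈ S, (ρC * c).trace = (ρ * c).trace)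
    (hE : ∃ E : Matrix (Fin n) (Fin n) ℂ → Matrix (Fin n) (Fin n) ℂ,
        IsCondExpOn (S : Set (Matrix (Fin n) (Fin n) ℂ)) E ∧
        ∀ x, (ρ * E x).trace = (ρ * x).trace) :
    ∀ c ∈ S,
      (Matrix.PosSemidef.sqrt hρ.posSemidef) * c * ((Matrix.PosSemidef.sqrt hρ.posSemidef))⁻¹ =
        (Matrix.PosSemidef.sqrt hρC.posSemidef) * c * ((Matrix.PosSemidef.sqrt hρC.posSemidef))⁻¹ := by
  obtain ⟨E, hE, hEρ⟩ := hE
  have hmod : ∀ c ∈ S, ρ * c * ρ⁻¹ = ρC * c * ρC⁻¹ := fun c hc =>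
    S.mul_mul_nonsing_inv_eq_of_trace_mul_eq hρ hρC hρCS hρCtr
      (fun _ hc' => hE.mul_mul_nonsing_inv_mem hEρ hρ hc') hc
  have hcomm : Commute ρ ρC := by
    have h := hmod ρC hρCS
    rw [mul_nonsing_inv_cancel_right _ _ ((isUnit_iff_isUnit_det ρC).mp hρC.isUnit)] at h
    rw [commute_iff_eq]
    conv_rhs =>
      rw [← h, nonsing_inv_mul_cancel_right _ _ ((isUnit_iff_isUnit_det ρ).mp hρ.isUnit)]
  intro c hc
  rw [hρ.posSemidef.sqrt_eq_cfcSqrt, hρC.posSemidef.sqrt_eq_cfcSqrt]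
  exact cfcSqrt_mul_mul_nonsing_inv_eq hρ hρC hcomm (hmod c hc)

/-- If a `ρ`-preserving conditional expectation onto `S` exists, then
`ρ^{1/2} c ρ^{-1/2} = ρ_C^{1/2} c ρ_C^{-1/2}` for every `c ∈ S`, where `ρ_C ∈ S`
is the restriction of `ρ` to `S`. -/
theorem rho_preserving_condExp_imp_modular_eq
    {n : ℕ} (S : StarSubalgebra ℂ (Matrix (Fin n) (Fin n) ℂ))
    (ρ : Matrix (Fin n) (Fin n) ℂ) (hρ : ρ.PosDef) (hρtr : ρ.trace = 1)
    (ρC : Matrix (Fin n) (Fin n) ℂ) (hρCS : ρC ∈ S) (hρC : ρC.PosDef)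
    (hρCtr : ∀ c ∈ S, (ρC * c).trace = (ρ * c).trace)
    (hE : ∃ E : Matrix (Fin n) (Fin n) ℂ → Matrix (Fin n) (Fin n) ℂ,
        IsCondExpOn (S : Set (Matrix (Fin n) (Fin n) ℂ)) E ∧
        ∀ x, (ρ * E x).trace = (ρ * x).trace) :
    ∀ c ∈ S,
      (Matrix.PosSemidef.sqrt hρ.posSemidef) * c * ((Matrix.PosSemidef.sqrt hρ.posSemidef))⁻¹ =
        (Matrix.PosSemidef.sqrt hρC.posSemidef) * c * ((Matrix.PosSemidef.sqrt hρC.posSemidef))⁻¹ :=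
  rho_preserving_condExp_imp_modular_eq_general S ρ hρ ρC hρCS hρC hρCtr hE
end

section
/- Let S be a unital star-subalgebra of Matrix n n ℂ, let ρ ∈ Matrix n n ℂ be positive definite with Tr ρ = 1, and let ρ_C ∈ S be positive definite with Tr(ρ_C * c) = Tr(ρ * c) for all c ∈ S. If ρ^{1/2} * c * ρ^{-1/2} = ρ_C^{1/2} * c * ρ_C^{-1/2} for every c ∈ S, then there exists a ρ-preserving conditional expectation from Matrix n n ℂ onto S. -/
open Matrix
open scoped ComplexOrder

/-!
Let `P` be the orthogonal projection of `Matrix n n ℂ` onto `S` for the Hilbert–Schmidt inner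
product, and put `B = ρ^{1/2}`, `C = ρ_C^{1/2}` (both invertible, `C ∈ S`). The trace condition on
`ρ_C` says exactly `P ρ = ρ_C`, and the expectation is `E x = C⁻¹ P(B x B) C⁻¹`.

`P` is an `S`-bimodule map, and the modular condition (together with its adjoint) rewrites
`B (c₁ x c₂) B` as `(C c₁ C⁻¹) (B x B) (C⁻¹ c₂ C)`; this gives the bimodule property of `E`, and
`E 1 = C⁻¹ ρ_C C⁻¹ = 1`. `P` is positive because a Hermitian element of `S` pairing nonnegatively
with every `wᴴ w`, `w ∈ S`, is positive (test it against its negative part, which lies in `S` by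
functional calculus). The projection onto the block algebra `M_k(S)` acts blockwise, so `P` is
completely positive, and so is `E` as a composition with congruences. Finally `P` is self-adjoint
for the trace pairing and `P (C⁻¹ ρ C⁻¹) = C⁻¹ ρ_C C⁻¹ = 1`, whence
`Tr (ρ E x) = Tr (P (C⁻¹ ρ C⁻¹) B x B) = Tr (ρ x)`.
-/

namespace Matrix

section Euclidean

variable {m n 𝕜 : Type*} [RCLike 𝕜]

def euclideanEquiv : Matrix m n 𝕜 ≃ₗ[𝕜] EuclideanSpace 𝕜 (m × n) where
  toFun x := WithLp.toLp 2 fun p => x p.1 p.2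
  invFun v := of fun i j => v (i, j)
  map_add' _ _ := rfl
  map_smul' _ _ := rfl
  left_inv _ := rfl
  right_inv _ := rfl

variable [Fintype m] [Fintype n]

theorem inner_euclideanEquiv (a b : Matrix m n 𝕜) :
    inner 𝕜 (euclideanEquiv a) (euclideanEquiv b) = (aᴴ * b).trace := by
  simp only [euclideanEquiv, PiLp.inner_apply, RCLike.inner_apply, trace, diag, mul_apply,
    conjTranspose_apply, Fintype.sum_prod_type]
  rw [Finset.sum_comm]
  exact Finset.sum_congr rfl fun i _ => Finset.sum_congr rfl fun j _ => mul_comm _ _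

theorem inner_euclideanEquiv_sub_eq_zero_iff {x y s : Matrix m m 𝕜} :
    inner 𝕜 (euclideanEquiv (x - y)) (euclideanEquiv s) = 0 ↔
      (sᴴ * x).trace = (sᴴ * y).trace := by
  rw [inner_euclideanEquiv, ← conjTranspose_conjTranspose s, ← conjTranspose_mul,
    trace_conjTranspose, star_eq_zero, conjTranspose_conjTranspose, Matrix.mul_sub, trace_sub,
    sub_eq_zero]

end Euclidean

theorem submatrix_mul_eq_sum {l n p α β κ R : Type*} [Fintype n] [Fintype κ]
    [NonUnitalNonAssocSemiring R] (X : Matrix (l × α) (n × κ) R) (Y : Matrix (n × κ) (p × β) R)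
    (a : α) (b : β) :
    (X * Y).submatrix (·, a) (·, b) =
      ∑ c, X.submatrix (·, a) (·, c) * Y.submatrix (·, c) (·, b) := by
  ext i j
  simp only [submatrix_apply, mul_apply, Fintype.sum_prod_type, Matrix.sum_apply]
  exact Finset.sum_comm

theorem trace_mul_eq_sum_submatrix {n κ R : Type*} [Fintype n] [Fintype κ]
    [NonUnitalNonAssocSemiring R] (X Y : Matrix (n × κ) (n × κ) R) :
    (X * Y).trace = ∑ a, ∑ b, (X.submatrix (·, a) (·, b) * Y.submatrix (·, b) (·, a)).trace :=
  calc (X * Y).trace = ∑ a, ((X * Y).submatrix (·, a) (·, a)).trace := by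
        simp only [trace, diag, submatrix_apply, Fintype.sum_prod_type]
        exact Finset.sum_comm
    _ = _ := by simp only [submatrix_mul_eq_sum, trace_sum]

end Matrix

theorem IsCP.comp {l m n : Type*} [Fintype l] [Fintype m] [Fintype n]
    {Φ : Matrix m m ℂ → Matrix n n ℂ} {Ψ : Matrix l l ℂ → Matrix m m ℂ}
    (hΦ : IsCP Φ) (hΨ : IsCP Ψ) : IsCP (Φ ∘ Ψ) :=
  fun k M hM => hΦ k _ (hΨ k M hM)

theorem isCP_conjTranspose_mul_mul {m n : Type*} [Fintype m] [Fintype n] (A : Matrix n m ℂ) :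
    IsCP fun x : Matrix n n ℂ => Aᴴ * x * A := fun k M hM => by
  convert hM.conjTranspose_mul_mul_same (kroneckerMap (· * ·) A (1 : Matrix (Fin k) (Fin k) ℂ))
    using 2
  ext ⟨i, a⟩ ⟨j, b⟩
  simp [mul_apply, kroneckerMap_apply, Fintype.sum_prod_type, one_apply, Finset.sum_mul,
    apply_ite (starRingEnd ℂ), ite_mul]

namespace StarSubalgebra

variable {m : Type*} [Fintype m] [DecidableEq m] (S : StarSubalgebra ℂ (Matrix m m ℂ))

instance isClosed_coe : IsClosed (S : Set (Matrix m m ℂ)) :=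
  Submodule.closed_of_finiteDimensional (Subalgebra.toSubmodule S.toSubalgebra)

theorem nonsing_inv_mem {x : Matrix m m ℂ} (hxS : x ∈ S) (hx : IsSelfAdjoint x) : x⁻¹ ∈ S := by
  rw [nonsing_inv_eq_ringInverse]
  by_cases hu : IsUnit x
  · rw [← cfc_ringInverse_id (R := ℝ) x hu]
    exact cfc_mem _ hxS
  · rw [Ring.inverse_non_unit _ hu]
    exact zero_mem S

theorem posSemidef_of_forall_trace_nonneg {y : Matrix m m ℂ} (hyS : y ∈ S)
    (hy : IsSelfAdjoint y) (h : ∀ w ∈ S, 0 ≤ (wᴴ * w * y).trace) : y.PosSemidef := by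
  set v := cfc (fun t => √(max t 0)) y
  set w := cfc (fun t => √(max (-t) 0)) y
  have hwH : wᴴ = w := (cfc_predicate _ y : IsSelfAdjoint w)
  have hvH : vᴴ = v := (cfc_predicate _ y : IsSelfAdjoint v)
  have hdecomp : y = v * v - w * w := by
    rw [← cfc_mul .., ← cfc_mul .., ← cfc_sub ..]
    conv_lhs => rw [← cfc_id' ℝ y]
    refine cfc_congr fun t _ => ?_
    simp only [Real.mul_self_sqrt (le_max_right _ _), max_zero_sub_eq_self]
  have hwv : w * v = 0 := by
    rw [← cfc_mul .., ← cfc_zero ℝ y]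
    refine cfc_congr fun t _ => ?_
    rcases le_total t 0 with ht | ht <;> simp [ht]
  -- `w * w` is the negative part of `y`, and the hypothesis at `w` forces it to vanish.
  have hww : w * w = 0 := by
    have hneg : (w * w)ᴴ * (w * w) = -(wᴴ * w * y) := by
      rw [hdecomp, conjTranspose_mul, hwH, Matrix.mul_sub, Matrix.mul_assoc w w (v * v),
        ← Matrix.mul_assoc w v v, hwv, Matrix.zero_mul, Matrix.mul_zero, zero_sub, neg_neg]
    rw [← trace_conjTranspose_mul_self_eq_zero_iff]
    refine le_antisymm ?_ (posSemidef_conjTranspose_mul_self _).trace_nonneg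
    rw [hneg, trace_neg]
    exact neg_nonpos.2 (h w (cfc_mem _ hyS))
  rw [hdecomp, hww, sub_zero]
  simpa only [hvH] using posSemidef_conjTranspose_mul_self v

-- The orthogonal projection onto `S` for the Hilbert–Schmidt inner product `⟪a, b⟫ = Tr (aᴴ b)`.
noncomputable def hsProj : Matrix m m ℂ →ₗ[ℂ] Matrix m m ℂ :=
  euclideanEquiv.symm.toLinearMap ∘ₗ
    (S.toSubalgebra.toSubmodule.map euclideanEquiv.toLinearMap).starProjection.toLinearMap ∘ₗ
    euclideanEquiv.toLinearMap

theorem hsProj_eq_iff {x y : Matrix m m ℂ} :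
    S.hsProj x = y ↔ y ∈ S ∧ ∀ s ∈ S, (s * x).trace = (s * y).trace := by
  set K := S.toSubalgebra.toSubmodule.map (euclideanEquiv : Matrix m m ℂ ≃ₗ[ℂ] _).toLinearMap
  have hK : ∀ z, euclideanEquiv z ∈ K ↔ z ∈ S := fun z => by simp [K, Submodule.mem_map_equiv]
  have horth : (∀ s ∈ S, (s * x).trace = (s * y).trace) ↔
      ∀ w ∈ K, inner ℂ (euclideanEquiv x - euclideanEquiv y) w = 0 := by
    simp only [K, Submodule.mem_map, forall_exists_index, and_imp, ← map_sub]
    refine ⟨fun h w s hs hw => ?_, fun h s hs => ?_⟩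
    · rw [← hw]
      exact inner_euclideanEquiv_sub_eq_zero_iff.2 (h _ (star_mem hs))
    · simpa [star_eq_conjTranspose] using
        inner_euclideanEquiv_sub_eq_zero_iff.1 (h _ (star s) (show star s ∈ S from star_mem hs) rfl)
  rw [hsProj, LinearMap.comp_apply, LinearMap.comp_apply, LinearEquiv.coe_toLinearMap,
    LinearEquiv.symm_apply_eq]
  constructor
  · intro h
    refine ⟨(hK y).1 (h ▸ K.starProjection_apply_mem _), horth.2 fun w hw => ?_⟩
    rw [← h]
    exact K.starProjection_inner_eq_zero _ w hw
  · rintro ⟨hy, hxy⟩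
    exact Submodule.eq_starProjection_of_mem_of_inner_eq_zero ((hK y).2 hy) (horth.1 hxy)

theorem hsProj_mem (x : Matrix m m ℂ) : S.hsProj x ∈ S :=
  (S.hsProj_eq_iff.1 rfl).1

theorem trace_mul_hsProj {s : Matrix m m ℂ} (hs : s ∈ S) (x : Matrix m m ℂ) :
    (s * S.hsProj x).trace = (s * x).trace :=
  ((S.hsProj_eq_iff.1 rfl).2 s hs).symm

theorem trace_mul_hsProj_comm (a b : Matrix m m ℂ) :
    (a * S.hsProj b).trace = (S.hsProj a * b).trace :=
  calc (a * S.hsProj b).trace = (S.hsProj b * S.hsProj a).trace := by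
        rw [trace_mul_comm, S.trace_mul_hsProj (S.hsProj_mem b)]
    _ = (S.hsProj a * b).trace := by
        rw [trace_mul_comm, S.trace_mul_hsProj (S.hsProj_mem a)]

theorem hsProj_mul_mul {c₁ c₂ : Matrix m m ℂ} (hc₁ : c₁ ∈ S) (hc₂ : c₂ ∈ S)
    (x : Matrix m m ℂ) : S.hsProj (c₁ * x * c₂) = c₁ * S.hsProj x * c₂ := by
  refine S.hsProj_eq_iff.2 ⟨mul_mem (mul_mem hc₁ (S.hsProj_mem x)) hc₂, fun s hs => ?_⟩
  have cycle : ∀ z, (s * (c₁ * z * c₂)).trace = (c₂ * s * c₁ * z).trace := fun z => by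
    rw [← Matrix.mul_assoc, ← Matrix.mul_assoc, trace_mul_comm]
    simp only [Matrix.mul_assoc]
  rw [cycle, cycle, S.trace_mul_hsProj (mul_mem (mul_mem hc₂ hs) hc₁)]

theorem hsProj_conjTranspose (x : Matrix m m ℂ) : S.hsProj xᴴ = (S.hsProj x)ᴴ := by
  refine S.hsProj_eq_iff.2 ⟨star_mem (S.hsProj_mem x), fun s hs => ?_⟩
  have h := S.trace_mul_hsProj (star_mem hs) x
  rw [star_eq_conjTranspose] at h
  rw [← conjTranspose_conjTranspose s, ← conjTranspose_mul, ← conjTranspose_mul,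
    trace_conjTranspose, trace_conjTranspose, trace_mul_comm, ← h, trace_mul_comm]

theorem posSemidef_hsProj {x : Matrix m m ℂ} (hx : x.PosSemidef) : (S.hsProj x).PosSemidef := by
  refine S.posSemidef_of_forall_trace_nonneg (S.hsProj_mem x)
    (by rw [IsSelfAdjoint, star_eq_conjTranspose, ← hsProj_conjTranspose, hx.1.eq])
    fun w hw => ?_
  rw [S.trace_mul_hsProj (mul_mem (star_mem hw) hw : wᴴ * w ∈ S), Matrix.mul_assoc,
    trace_mul_comm]
  exact (hx.mul_mul_conjTranspose_same w).trace_nonneg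

theorem submatrix_algebraMap_mem {ι : Type*} [Fintype ι] [DecidableEq ι] (r : ℂ) (a b : ι) :
    (algebraMap ℂ (Matrix (m × ι) (m × ι) ℂ) r).submatrix (·, a) (·, b) ∈ S := by
  by_cases hab : a = b
  · subst hab
    convert S.algebraMap_mem r using 1
    ext i j
    simp [algebraMap_matrix_apply]
  · convert zero_mem S using 1
    ext i j
    simp [algebraMap_matrix_apply, hab]

def blockSubalgebra (ι : Type*) [Fintype ι] [DecidableEq ι] :
    StarSubalgebra ℂ (Matrix (m × ι) (m × ι) ℂ) where
  carrier := {M | ∀ a b, M.submatrix (·, a) (·, b) ∈ S}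
  mul_mem' {X Y} hX hY a b :=
    submatrix_mul_eq_sum X Y a b ▸ sum_mem fun c _ => mul_mem (hX a c) (hY c b)
  add_mem' hX hY a b := add_mem (hX a b) (hY a b)
  algebraMap_mem' r := S.submatrix_algebraMap_mem r
  star_mem' hX a b := by
    simpa only [star_eq_conjTranspose, conjTranspose_submatrix] using star_mem (hX b a)

theorem hsProj_blockSubalgebra {ι : Type*} [Fintype ι] [DecidableEq ι]
    (M : Matrix (m × ι) (m × ι) ℂ) :
    (S.blockSubalgebra ι).hsProj M =
      of fun p q => S.hsProj (M.submatrix (·, p.2) (·, q.2)) p.1 q.1 := by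
  refine hsProj_eq_iff _ |>.2 ⟨fun a b => ?_, fun s hs => ?_⟩
  · exact S.hsProj_mem (M.submatrix (·, a) (·, b))
  rw [trace_mul_eq_sum_submatrix, trace_mul_eq_sum_submatrix]
  exact Finset.sum_congr rfl fun a _ => Finset.sum_congr rfl fun b _ =>
    (S.trace_mul_hsProj (hs a b) _).symm

theorem isCP_hsProj : IsCP S.hsProj := fun k M hM => by
  have h := (S.blockSubalgebra (Fin k)).posSemidef_hsProj hM
  rw [hsProj_blockSubalgebra] at h
  exact h

end StarSubalgebra

namespace Matrix

variable {m : Type*} [Fintype m] [DecidableEq m] {A : Matrix m m ℂ}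

theorem PosSemidef.sqrt_eq_cfc (hA : A.PosSemidef) : hA.sqrt = cfc Real.sqrt A := by
  rw [hA.1.cfc_eq, IsHermitian.cfc, Unitary.conjStarAlgAut_apply]
  rfl

theorem PosSemidef.sqrt_mul_self (hA : A.PosSemidef) : hA.sqrt * hA.sqrt = A := by
  conv_rhs => rw [← cfc_id' ℝ A hA.1]
  rw [hA.sqrt_eq_cfc, ← cfc_mul Real.sqrt Real.sqrt A]
  refine cfc_congr fun t ht => ?_
  obtain ⟨i, rfl⟩ := hA.1.spectrum_real_eq_range_eigenvalues ▸ ht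
  exact Real.mul_self_sqrt (hA.eigenvalues_nonneg i)

theorem PosSemidef.isHermitian_sqrt (hA : A.PosSemidef) : hA.sqrt.IsHermitian :=
  hA.sqrt_eq_cfc ▸ cfc_predicate (R := ℝ) (p := IsSelfAdjoint) Real.sqrt A

theorem PosSemidef.sqrt_mem {S : StarSubalgebra ℂ (Matrix m m ℂ)} (hA : A.PosSemidef)
    (hAS : A ∈ S) : hA.sqrt ∈ S :=
  hA.sqrt_eq_cfc ▸ cfc_mem _ hAS

theorem PosDef.isUnit_sqrt (hA : A.PosDef) : IsUnit hA.posSemidef.sqrt :=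
  isUnit_of_mul_isUnit_left (hA.posSemidef.sqrt_mul_self ▸ hA.isUnit)

end Matrix

namespace StarSubalgebra

variable {m : Type*} [Fintype m] [DecidableEq m] (S : StarSubalgebra ℂ (Matrix m m ℂ))

noncomputable def conjHsProj (B C x : Matrix m m ℂ) : Matrix m m ℂ :=
  C⁻¹ * S.hsProj (B * x * B) * C⁻¹

variable {S} {B C : Matrix m m ℂ}

theorem inv_mul_mul_eq_of_mul_mul_inv_eq (hB : B.IsHermitian) (hC : C.IsHermitian)
    (hmod : ∀ c ∈ S, B * c * B⁻¹ = C * c * C⁻¹) {c : Matrix m m ℂ} (hc : c ∈ S) :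
    B⁻¹ * c * B = C⁻¹ * c * C := by
  have h := congrArg conjTranspose (hmod _ (star_mem hc))
  simpa only [conjTranspose_mul, conjTranspose_nonsing_inv, hB.eq, hC.eq, star_eq_conjTranspose,
    conjTranspose_conjTranspose, Matrix.mul_assoc] using h

theorem conjHsProj_mul_mul (hB : B.IsHermitian) (hBu : IsUnit B) (hC : C.IsHermitian)
    (hCu : IsUnit C) (hCS : C ∈ S) (hmod : ∀ c ∈ S, B * c * B⁻¹ = C * c * C⁻¹)
    {c₁ c₂ : Matrix m m ℂ} (hc₁ : c₁ ∈ S) (hc₂ : c₂ ∈ S) (x : Matrix m m ℂ) :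
    S.conjHsProj B C (c₁ * x * c₂) = c₁ * S.conjHsProj B C x * c₂ := by
  have hB' := (isUnit_iff_isUnit_det B).1 hBu
  have hC' := (isUnit_iff_isUnit_det C).1 hCu
  have hCiS := S.nonsing_inv_mem hCS hC
  have key : B * (c₁ * x * c₂) * B = (C * c₁ * C⁻¹) * (B * x * B) * (C⁻¹ * c₂ * C) := by
    rw [← hmod c₁ hc₁, ← inv_mul_mul_eq_of_mul_mul_inv_eq hB hC hmod hc₂]
    simp only [Matrix.mul_assoc, nonsing_inv_mul_cancel_left _ _ hB']
    simp only [← Matrix.mul_assoc, mul_nonsing_inv_cancel_right _ _ hB']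
  rw [conjHsProj, conjHsProj, key, hsProj_mul_mul _ (mul_mem (mul_mem hCS hc₁) hCiS)
    (mul_mem (mul_mem hCiS hc₂) hCS)]
  simp only [Matrix.mul_assoc, nonsing_inv_mul_cancel_left _ _ hC']
  simp only [← Matrix.mul_assoc, mul_nonsing_inv_cancel_right _ _ hC']

theorem conjHsProj_one (hCu : IsUnit C) (hBC : S.hsProj (B * B) = C * C) :
    S.conjHsProj B C 1 = 1 := by
  have hC' := (isUnit_iff_isUnit_det C).1 hCu
  rw [conjHsProj, Matrix.mul_one, hBC]
  simp only [nonsing_inv_mul_cancel_left _ _ hC', mul_nonsing_inv _ hC']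

theorem trace_mul_conjHsProj (hC : C.IsHermitian) (hCu : IsUnit C) (hCS : C ∈ S)
    (hBC : S.hsProj (B * B) = C * C) (x : Matrix m m ℂ) :
    (B * B * S.conjHsProj B C x).trace = (B * B * x).trace := by
  have hC' := (isUnit_iff_isUnit_det C).1 hCu
  have hCiS := S.nonsing_inv_mem hCS hC
  have hunit : S.hsProj (C⁻¹ * (B * B) * C⁻¹) = 1 := by
    rw [hsProj_mul_mul _ hCiS hCiS, hBC]
    simp only [nonsing_inv_mul_cancel_left _ _ hC', mul_nonsing_inv _ hC']
  calc (B * B * S.conjHsProj B C x).trace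
      = (C⁻¹ * (B * B) * C⁻¹ * S.hsProj (B * x * B)).trace := by
        rw [conjHsProj, ← Matrix.mul_assoc, ← Matrix.mul_assoc, trace_mul_comm]
        simp only [Matrix.mul_assoc]
    _ = (B * x * B).trace := by rw [trace_mul_hsProj_comm, hunit, Matrix.one_mul]
    _ = (B * B * x).trace := by rw [trace_mul_comm, ← Matrix.mul_assoc]

theorem isCP_conjHsProj (hB : B.IsHermitian) (hC : C.IsHermitian) :
    IsCP (S.conjHsProj B C) := by
  have hconj : S.conjHsProj B C =
      (fun y => (C⁻¹)ᴴ * y * C⁻¹) ∘ S.hsProj ∘ fun x => Bᴴ * x * B := by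
    funext x
    simp only [conjHsProj, Function.comp_apply, hB.eq, hC.inv.eq]
  rw [hconj]
  exact (isCP_conjTranspose_mul_mul _).comp (S.isCP_hsProj.comp (isCP_conjTranspose_mul_mul _))

theorem isCondExpOn_conjHsProj (hB : B.IsHermitian) (hBu : IsUnit B) (hC : C.IsHermitian)
    (hCu : IsUnit C) (hCS : C ∈ S) (hBC : S.hsProj (B * B) = C * C)
    (hmod : ∀ c ∈ S, B * c * B⁻¹ = C * c * C⁻¹) :
    IsCondExpOn (S : Set (Matrix m m ℂ)) (S.conjHsProj B C) := by
  have hbimod {c₁ c₂ : Matrix m m ℂ} (hc₁ : c₁ ∈ S) (hc₂ : c₂ ∈ S) :=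
    conjHsProj_mul_mul hB hBu hC hCu hCS hmod hc₁ hc₂
  have hCiS := S.nonsing_inv_mem hCS hC
  refine ⟨fun x y => ?_, fun z x => ?_, conjHsProj_one hCu hBC, isCP_conjHsProj hB hC,
    fun x => mul_mem (mul_mem hCiS (S.hsProj_mem _)) hCiS, fun c hc => ?_,
    fun c₁ hc₁ c₂ hc₂ => hbimod hc₁ hc₂⟩
  · simp only [conjHsProj, Matrix.mul_add, Matrix.add_mul, map_add]
  · simp only [conjHsProj, Matrix.mul_smul, Matrix.smul_mul, map_smul]
  · simpa only [Matrix.mul_one, conjHsProj_one hCu hBC] using hbimod hc (one_mem S) 1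

end StarSubalgebra

open StarSubalgebra in
theorem modular_eq_imp_exists_rho_preserving_condExp_general
    {n : ℕ} (S : StarSubalgebra ℂ (Matrix (Fin n) (Fin n) ℂ))
    (ρ : Matrix (Fin n) (Fin n) ℂ) (hρ : ρ.PosDef)
    (ρC : Matrix (Fin n) (Fin n) ℂ) (hρCS : ρC ∈ S) (hρC : ρC.PosDef)
    (hρCtr : ∀ c ∈ S, (ρC * c).trace = (ρ * c).trace)
    (hmod : ∀ c ∈ S,
      hρ.posSemidef.sqrt * c * (hρ.posSemidef.sqrt)⁻¹ =
        hρC.posSemidef.sqrt * c * (hρC.posSemidef.sqrt)⁻¹) :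
    ∃ E : Matrix (Fin n) (Fin n) ℂ → Matrix (Fin n) (Fin n) ℂ,
      IsCondExpOn (S : Set (Matrix (Fin n) (Fin n) ℂ)) E ∧
      ∀ x, (ρ * E x).trace = (ρ * x).trace := by
  set B := hρ.posSemidef.sqrt
  set C := hρC.posSemidef.sqrt
  have hBB : B * B = ρ := hρ.posSemidef.sqrt_mul_self
  have hC : C.IsHermitian := hρC.posSemidef.isHermitian_sqrt
  have hCS : C ∈ S := hρC.posSemidef.sqrt_mem hρCS
  have hproj : S.hsProj (B * B) = C * C := by
    rw [hBB, hρC.posSemidef.sqrt_mul_self, hsProj_eq_iff]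
    exact ⟨hρCS, fun s hs => by rw [trace_mul_comm, ← hρCtr s hs, trace_mul_comm]⟩
  refine ⟨S.conjHsProj B C, isCondExpOn_conjHsProj hρ.posSemidef.isHermitian_sqrt
    hρ.isUnit_sqrt hC hρC.isUnit_sqrt hCS hproj hmod, fun x => ?_⟩
  rw [← hBB]
  exact trace_mul_conjHsProj hC hρC.isUnit_sqrt hCS hproj x

/-- Converse direction of Takesaki's theorem: if `ρ^{1/2} c ρ^{-1/2} = ρ_C^{1/2} c ρ_C^{-1/2}`
for every `c ∈ S`, then there exists a `ρ`-preserving conditional expectation onto `S`. -/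
theorem modular_eq_imp_exists_rho_preserving_condExp
    {n : ℕ} (S : StarSubalgebra ℂ (Matrix (Fin n) (Fin n) ℂ))
    (ρ : Matrix (Fin n) (Fin n) ℂ) (hρ : ρ.PosDef) (hρtr : ρ.trace = 1)
    (ρC : Matrix (Fin n) (Fin n) ℂ) (hρCS : ρC ∈ S) (hρC : ρC.PosDef)
    (hρCtr : ∀ c ∈ S, (ρC * c).trace = (ρ * c).trace)
    (hmod : ∀ c ∈ S,
      hρ.posSemidef.sqrt * c * (hρ.posSemidef.sqrt)⁻¹ =
        hρC.posSemidef.sqrt * c * (hρC.posSemidef.sqrt)⁻¹) :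
    ∃ E : Matrix (Fin n) (Fin n) ℂ → Matrix (Fin n) (Fin n) ℂ,
      IsCondExpOn (S : Set (Matrix (Fin n) (Fin n) ℂ)) E ∧
      ∀ x, (ρ * E x).trace = (ρ * x).trace :=
  modular_eq_imp_exists_rho_preserving_condExp_general S ρ hρ ρC hρCS hρC hρCtr hmod
end
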